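/- arXiv:1211.3043 — 2 statements merged into one kernel-verified Lean document; each statement's English description precedes it below -/
import Mathlib

section
/- Let T be a nonempty convex subset of a finite-dimensional real inner product space E, and let {d_t}_{t∈T} be a family of linear maps d_t : E → ℝ. Then there exists a convex function G : T → ℝ such that d_t is a subgradient of G at t for every t ∈ T if and only if {d_t} satisfies both: (i) local WMON: for every t ∈ T there is an open set U ⊆ E containing t such that d_x(x' − x) ≤ d_{x'}(x' − x) for all x, x' ∈ U ∩ T; and (ii) path independence ('vortex-freeness'): for all x, y, z ∈ T, ∫₀¹ d_{x+s(y−x)}(y − x) ds + ∫₀¹ d_{y+s(z−y)}(z − y) ds = ∫₀¹ d_{x+s(z−x)}(z − x) ds, where each integrand s ↦ d_{a+s(b−a)}(b − a) for a, b ∈ T is assumed integrable on [0,1]. -/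
/-!
If `G` is convex with subgradients `d t`, its restriction `s ↦ G (a + s • (b - a))` to a segment
has the subgradients `m s = d (a + s • (b - a)) (b - a)`, which are therefore monotone in `s`. Both
`∫ t..t', m` and `G` at `t'` minus `G` at `t` lie between `m t * (t' - t)` and `m t' * (t' - t)`;
telescoping over finer and finer partitions shows that the integral over `[0, 1]` is `G b - G a`,
which gives path independence (and WMON holds even globally).

Conversely, let `G x` be the line integral from a fixed `t₀ ∈ T` to `x`. By path independence,
`G y - G x` is the line integral from `x` to `y`. Local WMON makes its integrand monotone near every
point of `[0, 1]`, hence on all of `[0, 1]` since the interval is connected, so the integral is at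
least the value `d x (y - x)` of the integrand at `0`. Thus `d` is a field of subgradients of `G`,
and a function with a subgradient at every point of a convex set is convex there.
-/

open Set Filter Topology MeasureTheory
open scoped Interval

theorem MonotoneOn.union_of_ordConnected {α β : Type*} [LinearOrder α] [Preorder β]
    {f : α → β} {s t : Set α} {c : α} (hs : MonotoneOn f s) (ht : MonotoneOn f t)
    [s.OrdConnected] [t.OrdConnected] (hcs : c ∈ s) (hct : c ∈ t) :
    MonotoneOn f (s ∪ t) := by
  have cross : ∀ {s t : Set α}, MonotoneOn f s → MonotoneOn f t → s.OrdConnected →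
      t.OrdConnected → c ∈ s → c ∈ t → ∀ u ∈ s, ∀ v ∈ t, u ≤ v → f u ≤ f v := by
    intro s t hs ht hso hto hcs hct u hu v hv huv
    rcases le_total u c with huc | hcu
    · rcases le_total c v with hcv | hvc
      · exact (hs hu hcs huc).trans (ht hct hv hcv)
      · exact hs hu (hso.out hu hcs ⟨huv, hvc⟩) huv
    · exact ht (hto.out hct hv ⟨hcu, huv⟩) hv huv
  rintro u (hu | hu) v (hv | hv) huv
  · exact hs hu hv huv
  · exact cross hs ht ‹_› ‹_› hcs hct u hu v hv huv
  · exact cross ht hs ‹_› ‹_› hct hcs u hu v hv huv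
  · exact ht hu hv huv

theorem IsPreconnected.monotoneOn_of_locally {α β : Type*} [LinearOrder α] [TopologicalSpace α]
    [OrderTopology α] [Preorder β] {f : α → β} {s : Set α} (hs : IsPreconnected s)
    (hloc : ∀ x ∈ s, ∃ U ∈ 𝓝 x, MonotoneOn f (U ∩ s)) : MonotoneOn f s := by
  have hso := hs.ordConnected
  have huIcc : ∀ x ∈ s, ∀ y ∈ s, MonotoneOn f [[x, y]] := by
    refine fun x hx y hy ↦ hs.induction₂ (fun x y ↦ MonotoneOn f [[x, y]]) ?_ ?_ ?_ hx hy
    · intro x hx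
      obtain ⟨U, hU, hfU⟩ := hloc x hx
      have hsmall : ∀ᶠ y in 𝓝 x, [[x, y]] ⊆ U :=
        (tendsto_const_nhds.uIcc tendsto_id).eventually (eventually_smallSets_subset.2 hU)
      filter_upwards [nhdsWithin_le_nhds hsmall, self_mem_nhdsWithin] with y hyU hys
      exact hfU.mono (subset_inter hyU (hso.uIcc_subset hx hys))
    · intro x y z _ _ _ hxy hyz
      exact (hxy.union_of_ordConnected hyz right_mem_uIcc left_mem_uIcc).mono
        uIcc_subset_uIcc_union_uIcc
    · intro x y _ _ h
      rwa [uIcc_comm]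
  intro x hx y hy hxy
  exact huIcc x hx y hy left_mem_uIcc right_mem_uIcc hxy

theorem eq_of_abs_sub_le_mul_sub {ψ g : ℝ → ℝ} {a b : ℝ} (hab : a ≤ b)
    (h : ∀ t ∈ Icc a b, ∀ t' ∈ Icc a b, t ≤ t' → |ψ t' - ψ t| ≤ (g t' - g t) * (t' - t)) :
    ψ a = ψ b := by
  -- telescope over the uniform partition of `[a, b]` into `n` pieces
  have bound : ∀ n : ℕ, 0 < n → |ψ b - ψ a| ≤ (g b - g a) * (b - a) / n := by
    intro n hn
    have hn' : (0 : ℝ) < n := Nat.cast_pos.mpr hn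
    set p : ℕ → ℝ := fun k ↦ a + k * ((b - a) / n) with hp
    have hp0 : p 0 = a := by simp [hp]
    have hpn : p n = b := by simp only [hp]; field_simp; ring
    have hstep : ∀ k, p (k + 1) - p k = (b - a) / n := by intro k; simp only [hp]; push_cast; ring
    have hh : 0 ≤ (b - a) / n := div_nonneg (sub_nonneg.2 hab) hn'.le
    have hpmem : ∀ k ≤ n, p k ∈ Icc a b := by
      intro k hk
      have hk' : (k : ℝ) ≤ n := by exact_mod_cast hk
      refine ⟨le_add_of_nonneg_right (by positivity), ?_⟩
      calc p k ≤ a + n * ((b - a) / n) := by simp only [hp]; gcongr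
        _ = b := by field_simp; ring
    calc |ψ b - ψ a| = |∑ k ∈ Finset.range n, (ψ (p (k + 1)) - ψ (p k))| := by
          rw [Finset.sum_range_sub (fun k ↦ ψ (p k)), hp0, hpn]
      _ ≤ ∑ k ∈ Finset.range n, |ψ (p (k + 1)) - ψ (p k)| := Finset.abs_sum_le_sum_abs _ _
      _ ≤ ∑ k ∈ Finset.range n, (g (p (k + 1)) - g (p k)) * ((b - a) / n) := by
          refine Finset.sum_le_sum fun k hk ↦ ?_
          have hk := Finset.mem_range.mp hk
          rw [← hstep k]
          exact h _ (hpmem k hk.le) _ (hpmem (k + 1) hk) (by linarith [hstep k])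
      _ = (g b - g a) * (b - a) / n := by
          rw [← Finset.sum_mul, Finset.sum_range_sub (fun k ↦ g (p k)), hp0, hpn]
          ring
  have hlim : Tendsto (fun n : ℕ ↦ (g b - g a) * (b - a) / n) atTop (𝓝 0) :=
    tendsto_const_div_atTop_nhds_zero_nat _
  have := ge_of_tendsto hlim (eventually_atTop.2 ⟨1, fun n hn ↦ bound n hn⟩)
  exact (sub_eq_zero.1 (abs_nonpos_iff.1 this)).symm

theorem monotoneOn_of_subgradient {φ m : ℝ → ℝ} {s : Set ℝ}
    (h : ∀ x ∈ s, ∀ y ∈ s, φ x + m x * (y - x) ≤ φ y) : MonotoneOn m s := by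
  intro x hx y hy hxy
  rcases hxy.eq_or_lt with rfl | hlt
  · exact le_rfl
  · nlinarith [h x hx y hy, h y hy x hx]

theorem MonotoneOn.intervalIntegral_mem_Icc {m : ℝ → ℝ} {a b : ℝ} (hab : a ≤ b)
    (hm : MonotoneOn m (Icc a b)) :
    ∫ s in a..b, m s ∈ Icc (m a * (b - a)) (m b * (b - a)) := by
  have hint : IntervalIntegrable m volume a b := (uIcc_of_le hab ▸ hm).intervalIntegrable
  have ha : a ∈ Icc a b := left_mem_Icc.2 hab
  have hb : b ∈ Icc a b := right_mem_Icc.2 hab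
  constructor
  · simpa [mul_comm] using intervalIntegral.integral_mono_on hab intervalIntegrable_const hint
      fun s hs ↦ hm ha hs hs.1
  · simpa [mul_comm] using intervalIntegral.integral_mono_on hab hint intervalIntegrable_const
      fun s hs ↦ hm hs hb hs.2

theorem intervalIntegral_eq_sub_of_subgradient {φ m : ℝ → ℝ} {a b : ℝ} (hab : a ≤ b)
    (h : ∀ s ∈ Icc a b, ∀ s' ∈ Icc a b, φ s + m s * (s' - s) ≤ φ s') :
    ∫ s in a..b, m s = φ b - φ a := by
  have hm : MonotoneOn m (Icc a b) := monotoneOn_of_subgradient h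
  have hint : ∀ t ∈ Icc a b, IntervalIntegrable m volume a t := fun t ht ↦
    (hm.mono (uIcc_of_le ht.1 ▸ Icc_subset_Icc_right ht.2)).intervalIntegrable
  have hψ := eq_of_abs_sub_le_mul_sub (ψ := fun t ↦ (∫ s in a..t, m s) - φ t) (g := m) hab
    fun t ht t' ht' htt' ↦ by
      have hI := (hm.mono (Icc_subset_Icc ht.1 ht'.2)).intervalIntegral_mem_Icc htt'
      rw [← intervalIntegral.integral_interval_sub_left (hint t' ht') (hint t ht)] at hI
      have h₁ := h t ht t' ht'
      have h₂ := h t' ht' t ht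
      rw [abs_le]
      constructor <;> linarith [hI.1, hI.2]
  simp only [intervalIntegral.integral_same, zero_sub] at hψ
  linarith

section Segment

variable {E : Type*} [AddCommGroup E] [Module ℝ E]

theorem convexOn_of_subgradient {T : Set E} (hT : Convex ℝ T) {G : E → ℝ}
    {d : E → E →ₗ[ℝ] ℝ} (h : ∀ t ∈ T, ∀ x ∈ T, G t + d t (x - t) ≤ G x) : ConvexOn ℝ T G := by
  refine ⟨hT, fun x hx y hy a b ha hb hab ↦ ?_⟩
  set z := a • x + b • y
  have hz : z ∈ T := hT hx hy ha hb hab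
  have hbalance : a • (x - z) + b • (y - z) = 0 := by
    obtain rfl : b = 1 - a := by linarith
    module
  have hdz : a * d z (x - z) + b * d z (y - z) = 0 := by
    simpa using congrArg (d z) hbalance
  have hx' := mul_le_mul_of_nonneg_left (h z hz x hx) ha
  have hy' := mul_le_mul_of_nonneg_left (h z hz y hy) hb
  have hGz : (a + b) * G z = G z := by rw [hab, one_mul]
  simp only [smul_eq_mul]
  linarith

noncomputable def segmentIntegral (d : E → E →ₗ[ℝ] ℝ) (a b : E) : ℝ :=
  ∫ s in (0 : ℝ)..1, d (a + s • (b - a)) (b - a)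

theorem add_smul_sub_add_smul (a v : E) (s s' : ℝ) :
    a + s' • v - (a + s • v) = (s' - s) • v := by
  module

theorem segmentIntegral_eq_sub_of_subgradient {T : Set E} (hT : Convex ℝ T) {G : E → ℝ}
    {d : E → E →ₗ[ℝ] ℝ} (h : ∀ t ∈ T, ∀ x ∈ T, G t + d t (x - t) ≤ G x) {a b : E}
    (ha : a ∈ T) (hb : b ∈ T) : segmentIntegral d a b = G b - G a := by
  have hline := intervalIntegral_eq_sub_of_subgradient (φ := fun s ↦ G (a + s • (b - a)))
    zero_le_one fun s hs s' hs' ↦ by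
      have := h _ (hT.add_smul_sub_mem ha hb hs) _ (hT.add_smul_sub_mem ha hb hs')
      rwa [add_smul_sub_add_smul, map_smul, smul_eq_mul, mul_comm] at this
  simp only [zero_smul, one_smul, add_zero, add_sub_cancel] at hline
  exact hline

theorem monotoneOn_segment_of_locally [TopologicalSpace E] [ContinuousAdd E]
    [ContinuousSMul ℝ E] {T : Set E} (hT : Convex ℝ T) {d : E → E →ₗ[ℝ] ℝ}
    (hW : ∀ t ∈ T, ∃ U : Set E, IsOpen U ∧ t ∈ U ∧
      ∀ x ∈ U ∩ T, ∀ x' ∈ U ∩ T, d x (x' - x) ≤ d x' (x' - x))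
    {a b : E} (ha : a ∈ T) (hb : b ∈ T) :
    MonotoneOn (fun s : ℝ ↦ d (a + s • (b - a)) (b - a)) (Icc 0 1) := by
  refine isPreconnected_Icc.monotoneOn_of_locally fun c hc ↦ ?_
  obtain ⟨U, hU, hcU, hWU⟩ := hW _ (hT.add_smul_sub_mem ha hb hc)
  have hcont : Continuous fun s : ℝ ↦ a + s • (b - a) := by fun_prop
  refine ⟨_, (hU.preimage hcont).mem_nhds hcU, ?_⟩
  rintro u ⟨huU, hu⟩ v ⟨hvU, hv⟩ huv
  have := hWU _ ⟨huU, hT.add_smul_sub_mem ha hb hu⟩ _ ⟨hvU, hT.add_smul_sub_mem ha hb hv⟩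
  simp only [add_smul_sub_add_smul, map_smul, smul_eq_mul] at this
  rcases huv.eq_or_lt with rfl | hlt
  · exact le_rfl
  · exact le_of_mul_le_mul_left this (sub_pos.2 hlt)

theorem apply_sub_le_segmentIntegral {d : E → E →ₗ[ℝ] ℝ} {a b : E}
    (hm : MonotoneOn (fun s : ℝ ↦ d (a + s • (b - a)) (b - a)) (Icc 0 1)) :
    d a (b - a) ≤ segmentIntegral d a b := by
  have := (hm.intervalIntegral_mem_Icc zero_le_one).1
  simp only [zero_smul, add_zero, sub_zero, mul_one] at this
  exact this

end Segment

theorem local_wmon_vortex_free_iff_subgradient_general {E : Type*}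
    [NormedAddCommGroup E] [InnerProductSpace ℝ E]
    (T : Set E) (hT : T.Nonempty) (hTconv : Convex ℝ T) (d : E → (E →ₗ[ℝ] ℝ)) :
    (∃ G : E → ℝ, ConvexOn ℝ T G ∧ ∀ t ∈ T, ∀ x ∈ T, G t + d t (x - t) ≤ G x) ↔
    ((∀ t ∈ T, ∃ U : Set E, IsOpen U ∧ t ∈ U ∧
        ∀ x ∈ U ∩ T, ∀ x' ∈ U ∩ T, d x (x' - x) ≤ d x' (x' - x)) ∧
      (∀ x ∈ T, ∀ y ∈ T, ∀ z ∈ T,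
        (∫ s in (0:ℝ)..1, d (x + s • (y - x)) (y - x)) +
          (∫ s in (0:ℝ)..1, d (y + s • (z - y)) (z - y)) =
          ∫ s in (0:ℝ)..1, d (x + s • (z - x)) (z - x))) := by
  constructor
  · rintro ⟨G, -, hG⟩
    refine ⟨fun t _ ↦ ⟨univ, isOpen_univ, mem_univ t, fun x ⟨_, hx⟩ x' ⟨_, hx'⟩ ↦ ?_⟩,
      fun x hx y hy z hz ↦ ?_⟩
    · have := hG x' hx' x hx
      rw [← neg_sub, map_neg] at this
      linarith [hG x hx x' hx']
    · change segmentIntegral d x y + segmentIntegral d y z = segmentIntegral d x z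
      rw [segmentIntegral_eq_sub_of_subgradient hTconv hG hx hy,
        segmentIntegral_eq_sub_of_subgradient hTconv hG hy hz,
        segmentIntegral_eq_sub_of_subgradient hTconv hG hx hz]
      ring
  · rintro ⟨hW, hV⟩
    obtain ⟨t₀, ht₀⟩ := hT
    have hG : ∀ t ∈ T, ∀ x ∈ T,
        segmentIntegral d t₀ t + d t (x - t) ≤ segmentIntegral d t₀ x := fun t ht x hx ↦ by
      have hpath : segmentIntegral d t₀ t + segmentIntegral d t x = segmentIntegral d t₀ x :=
        hV t₀ ht₀ t ht x hx
      linarith [apply_sub_le_segmentIntegral (monotoneOn_segment_of_locally hTconv hW ht hx)]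
    exact ⟨_, convexOn_of_subgradient hTconv hG, hG⟩

/-- Archer–Kleinberg: on a convex type space in a finite-dimensional real inner product
space, a family of linear maps is a selection of subgradients of a convex function iff
it satisfies local weak monotonicity and path independence (vortex-freeness), the line
integrands being assumed integrable on `[0,1]`. -/
theorem local_wmon_vortex_free_iff_subgradient {E : Type*}
    [NormedAddCommGroup E] [InnerProductSpace ℝ E] [FiniteDimensional ℝ E]
    (T : Set E) (hT : T.Nonempty) (hTconv : Convex ℝ T) (d : E → (E →ₗ[ℝ] ℝ))
    (hInt : ∀ a ∈ T, ∀ b ∈ T,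
      IntervalIntegrable (fun s : ℝ => d (a + s • (b - a)) (b - a)) MeasureTheory.volume 0 1) :
    (∃ G : E → ℝ, ConvexOn ℝ T G ∧ ∀ t ∈ T, ∀ x ∈ T, G t + d t (x - t) ≤ G x) ↔
    ((∀ t ∈ T, ∃ U : Set E, IsOpen U ∧ t ∈ U ∧
        ∀ x ∈ U ∩ T, ∀ x' ∈ U ∩ T, d x (x' - x) ≤ d x' (x' - x)) ∧
      (∀ x ∈ T, ∀ y ∈ T, ∀ z ∈ T,
        (∫ s in (0:ℝ)..1, d (x + s • (y - x)) (y - x)) +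
          (∫ s in (0:ℝ)..1, d (y + s • (z - y)) (z - y)) =
          ∫ s in (0:ℝ)..1, d (x + s • (z - x)) (z - x))) :=
  local_wmon_vortex_free_iff_subgradient_general T hT hTconv d
end

section
/- Let T ⊆ ℝⁿ and let Γ : T → Set R be a non-redundant elicitable property. Then Γ is single-valued almost everywhere: the set {t ∈ T : Γ(t) contains at least two distinct elements} has Lebesgue measure zero in ℝⁿ. -/
/-- Each payoff function of `S` is affine. -/
def IsAffineScore {V : Type*} [AddCommGroup V] [Module ℝ V] {R : Type*}
    (S : R → V → ℝ) : Prop :=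
  ∀ r : R, ∃ (ℓ : V →ₗ[ℝ] ℝ) (c : ℝ), ∀ x, S r x = ℓ x + c

/-- `S` elicits the property `Γ` on `T`. -/
def Elicits {V : Type*} [AddCommGroup V] [Module ℝ V] {R : Type*}
    (T : Set V) (S : R → V → ℝ) (Γ : V → Set R) : Prop :=
  ∀ t ∈ T, (∃ r : R, ∀ r' : R, S r' t ≤ S r t) ∧ Γ t = {r : R | ∀ r' : R, S r' t ≤ S r t}

/-- `Γ` is non-redundant. -/
def NonRedundant {V : Type*} [AddCommGroup V] [Module ℝ V] {R : Type*}
    (T : Set V) (Γ : V → Set R) : Prop :=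
  ∀ r r' : R, r ≠ r' → ¬ ({t ∈ T | r' ∈ Γ t} ⊆ {t ∈ T | r ∈ Γ t})

/-!
Let `g = sup_r S r` be the supremum of the affine scores and `D` the convex set where it is
finite; `g` is convex on `D`. For `t ∈ T`, each report `r ∈ Γ t` gives an affine minorant `S r`
of `g` touching it at `t`, so wherever `g` is differentiable at an interior point `t` of `D`, its
derivative is the linear part of every such `r`. Two reports of `Γ t` with the same linear part
have the same affine score, since their scores agree at `t`, and non-redundancy makes the score
injective. Hence the types with two reports lie in the frontier of `D`, null because `D` is
convex, or among the points of non-differentiability of the locally Lipschitz function `g`,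
null by Rademacher's theorem.
-/

open Set Filter Topology MeasureTheory

section SupOfConvex

variable {E ι : Type*} [AddCommGroup E] [Module ℝ E] {s : Set E} {f : ι → E → ℝ}

theorem convex_setOf_bddAbove_range (hs : Convex ℝ s) (hf : ∀ i, ConvexOn ℝ s (f i)) :
    Convex ℝ {x ∈ s | BddAbove (range fun i => f i x)} := by
  rintro x ⟨hxs, Mx, hMx⟩ y ⟨hys, My, hMy⟩ a b ha hb hab
  refine ⟨hs hxs hys ha hb hab, a • Mx + b • My, ?_⟩
  rintro _ ⟨i, rfl⟩
  calc f i (a • x + b • y) ≤ a • f i x + b • f i y := (hf i).2 hxs hys ha hb hab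
    _ ≤ a • Mx + b • My := by
      gcongr
      exacts [hMx ⟨i, rfl⟩, hMy ⟨i, rfl⟩]

theorem convexOn_ciSup (hs : Convex ℝ s) (hf : ∀ i, ConvexOn ℝ s (f i)) :
    ConvexOn ℝ {x ∈ s | BddAbove (range fun i => f i x)} fun x => ⨆ i, f i x := by
  have hD := convex_setOf_bddAbove_range hs hf
  rcases isEmpty_or_nonempty ι with hι | hι
  · simpa only [Real.iSup_of_isEmpty] using convexOn_const 0 hD
  refine ⟨hD, fun x hx y hy a b ha hb hab => ciSup_le fun i => ?_⟩
  calc f i (a • x + b • y) ≤ a • f i x + b • f i y := (hf i).2 hx.1 hy.1 ha hb hab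
    _ ≤ a • (⨆ i, f i x) + b • ⨆ i, f i y := by
      gcongr
      exacts [le_ciSup hx.2 i, le_ciSup hy.2 i]

end SupOfConvex

section Rademacher

variable {E F : Type*} [NormedAddCommGroup E] [NormedSpace ℝ E] [FiniteDimensional ℝ E]
  [MeasurableSpace E] [BorelSpace E] [NormedAddCommGroup F] [NormedSpace ℝ F]
  [FiniteDimensional ℝ F] {μ : Measure E} [μ.IsAddHaarMeasure] {s : Set E}

theorem LocallyLipschitzOn.ae_differentiableAt_of_mem {f : E → F} (hs : IsOpen s)
    (hf : LocallyLipschitzOn s f) : ∀ᵐ x ∂μ, x ∈ s → DifferentiableAt ℝ f x := by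
  have hnhds : ∀ x ∈ s, ∃ K, ∃ u ∈ 𝓝 x, LipschitzOnWith K f u := fun x hx => by
    simpa only [hs.nhdsWithin_eq hx] using hf hx
  choose! K u hu hK using hnhds
  obtain ⟨c, hcs, hc, hsc⟩ := TopologicalSpace.countable_cover_nhdsWithin (s := s)
    (f := fun x => interior (u x)) fun x hx => mem_nhdsWithin_of_mem_nhds
      (interior_mem_nhds.2 (hu x hx))
  have hball : ∀ᵐ y ∂μ, ∀ x ∈ c, y ∈ interior (u x) → DifferentiableAt ℝ f y := by
    refine (ae_ball_iff hc).2 fun x hx => ?_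
    filter_upwards [((hK x (hcs hx)).mono interior_subset).ae_differentiableWithinAt_of_mem]
      with y hy hyu
    exact (hy hyu).differentiableAt (isOpen_interior.mem_nhds hyu)
  filter_upwards [hball] with y hy hys
  obtain ⟨x, hx, hyx⟩ := mem_iUnion₂.1 (hsc hys)
  exact hy x hx hyx

theorem ConvexOn.ae_differentiableAt_of_mem_interior {f : E → ℝ} (hf : ConvexOn ℝ s f) :
    ∀ᵐ x ∂μ, x ∈ interior s → DifferentiableAt ℝ f x :=
  hf.locallyLipschitzOn_interior.ae_differentiableAt_of_mem isOpen_interior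

end Rademacher

theorem HasFDerivAt.eq_of_eventuallyLE_of_eq {E : Type*} [NormedAddCommGroup E]
    [NormedSpace ℝ E] {f g : E → ℝ} {f' g' : E →L[ℝ] ℝ} {x : E} (hf : HasFDerivAt f f' x)
    (hg : HasFDerivAt g g' x) (hle : f ≤ᶠ[𝓝 x] g) (heq : f x = g x) : f' = g' := by
  have hmin : IsLocalMin (g - f) x := hle.mono fun y hy => by
    simp only [Pi.sub_apply, heq, sub_self, sub_nonneg, hy]
  exact (sub_eq_zero.1 (hmin.hasFDerivAt_eq_zero (hg.sub hf))).symm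

section Elicitation

variable {V R : Type*} [AddCommGroup V] [Module ℝ V] {T : Set V} {S : R → V → ℝ}
  {Γ : V → Set R} {t : V} {r r' : R}

theorem Elicits.mem_iff (hE : Elicits T S Γ) (ht : t ∈ T) :
    r ∈ Γ t ↔ ∀ r', S r' t ≤ S r t := by
  rw [(hE t ht).2]
  rfl

theorem Elicits.bddAbove (hE : Elicits T S Γ) (ht : t ∈ T) :
    BddAbove (range fun r => S r t) := by
  obtain ⟨r, hr⟩ := (hE t ht).1
  exact ⟨S r t, forall_mem_range.2 hr⟩

theorem Elicits.ciSup_eq (hE : Elicits T S Γ) (ht : t ∈ T) (hr : r ∈ Γ t) :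
    ⨆ r', S r' t = S r t :=
  have : Nonempty R := ⟨r⟩
  ciSup_eq_of_forall_le_of_forall_lt_exists_gt ((hE.mem_iff ht).1 hr) fun _ h => ⟨r, h⟩

theorem Elicits.injective (hE : Elicits T S Γ) (hΓ : NonRedundant T Γ) :
    Function.Injective S := by
  intro r r' h
  by_contra hne
  refine hΓ r r' hne fun t ⟨ht, hr'⟩ => ⟨ht, ?_⟩
  rw [hE.mem_iff ht] at hr' ⊢
  simpa only [h] using hr'

theorem Elicits.linear_ne_of_mem_of_ne {ℓ : R → V →ₗ[ℝ] ℝ} {c : R → ℝ}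
    (hS : ∀ r x, S r x = ℓ r x + c r) (hE : Elicits T S Γ) (hΓ : NonRedundant T Γ)
    (ht : t ∈ T) (hr : r ∈ Γ t) (hr' : r' ∈ Γ t) (hne : r ≠ r') : ℓ r ≠ ℓ r' := by
  intro hℓ
  have hval : S r t = S r' t := le_antisymm ((hE.mem_iff ht).1 hr' r) ((hE.mem_iff ht).1 hr r')
  have hc : c r = c r' := by
    rw [hS, hS, hℓ] at hval
    exact add_left_cancel hval
  exact hne (hE.injective hΓ (funext fun x => by rw [hS, hS, hℓ, hc]))

end Elicitation

theorem Elicits.not_differentiableAt_iSup {V R : Type*} [NormedAddCommGroup V]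
    [NormedSpace ℝ V] [FiniteDimensional ℝ V] {T : Set V} {S : R → V → ℝ} {Γ : V → Set R}
    {t : V} {r r' : R} {ℓ : R → V →ₗ[ℝ] ℝ} {c : R → ℝ} (hS : ∀ r x, S r x = ℓ r x + c r)
    (hE : Elicits T S Γ) (hΓ : NonRedundant T Γ) (ht : t ∈ T)
    (htD : t ∈ interior {x | BddAbove (range fun r => S r x)})
    (hr : r ∈ Γ t) (hr' : r' ∈ Γ t) (hne : r ≠ r') :
    ¬ DifferentiableAt ℝ (fun x => ⨆ r, S r x) t := by
  intro hd
  have hderiv : ∀ s ∈ Γ t, (ℓ s).toContinuousLinearMap = fderiv ℝ (fun x => ⨆ r, S r x) t := by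
    intro s hs
    have hSs : HasFDerivAt (S s) (ℓ s).toContinuousLinearMap t := by
      rw [funext (hS s)]
      exact (ℓ s).toContinuousLinearMap.hasFDerivAt.add_const (c s)
    refine hSs.eq_of_eventuallyLE_of_eq hd.hasFDerivAt ?_ (hE.ciSup_eq ht hs).symm
    filter_upwards [mem_interior_iff_mem_nhds.1 htD] with x hx using le_ciSup hx s
  exact hE.linear_ne_of_mem_of_ne hS hΓ ht hr hr' hne
    (LinearMap.toContinuousLinearMap.injective ((hderiv r hr).trans (hderiv r' hr').symm))

theorem elicitable_single_valued_ae_general (n : ℕ) {R : Type*}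
    (T : Set (EuclideanSpace ℝ (Fin n)))
    (Γ : EuclideanSpace ℝ (Fin n) → Set R)
    (hΓ : NonRedundant T Γ)
    (hel : ∃ S : R → EuclideanSpace ℝ (Fin n) → ℝ, IsAffineScore S ∧ Elicits T S Γ) :
    MeasureTheory.volume {t ∈ T | ∃ r ∈ Γ t, ∃ r' ∈ Γ t, r ≠ r'} = 0 := by
  obtain ⟨S, hS, hE⟩ := hel
  choose ℓ c hS using hS
  set D := {x | BddAbove (range fun r => S r x)}
  have hconv : ∀ r, ConvexOn ℝ univ (S r) := fun r => by
    rw [funext (hS r)]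
    exact ((ℓ r).convexOn convex_univ).add_const (c r)
  have hg : ConvexOn ℝ D fun x => ⨆ r, S r x := by
    simpa only [sep_univ] using convexOn_ciSup convex_univ hconv
  refine measure_mono_null ?_ (measure_union_null (hg.1.addHaar_frontier volume)
    (ae_iff.1 hg.ae_differentiableAt_of_mem_interior))
  rintro t ⟨ht, r, hr, r', hr', hne⟩
  by_cases hi : t ∈ interior D
  · exact Or.inr fun hd => hE.not_differentiableAt_iSup hS hΓ ht hi hr hr' hne (hd hi)
  · exact Or.inl ⟨subset_closure (hE.bddAbove ht), hi⟩

/-- A non-redundant elicitable property on a subset of `ℝⁿ` is single-valued outside a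
set of Lebesgue measure zero. -/
theorem elicitable_single_valued_ae (n : ℕ) {R : Type*}
    (T : Set (EuclideanSpace ℝ (Fin n))) (hT : T.Nonempty)
    (Γ : EuclideanSpace ℝ (Fin n) → Set R)
    (hΓne : ∀ t ∈ T, (Γ t).Nonempty) (hΓ : NonRedundant T Γ)
    (hel : ∃ S : R → EuclideanSpace ℝ (Fin n) → ℝ, IsAffineScore S ∧ Elicits T S Γ) :
    MeasureTheory.volume {t ∈ T | ∃ r ∈ Γ t, ∃ r' ∈ Γ t, r ≠ r'} = 0 :=
  elicitable_single_valued_ae_general n T Γ hΓ hel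
end
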